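/- arXiv:2605.10534 — 2 statements merged into one kernel-verified Lean document; each statement's English description precedes it below -/
import Mathlib

section
/- For a prime power q, the Hermitian curve y^q + y = x^{q+1} over F_{q^2} has exactly q^3 affine F_{q^2}-rational points; that is, the set {(a,b) ∈ F_{q^2}^2 : b^q + b = a^{q+1}} has cardinality q^3. -/
open Polynomial

/-- Root-count bound: in a field, the number of roots of a nonzero polynomial is at most
its natural degree. -/
lemma root_count_le {F : Type*} [Field F] [Fintype F] [DecidableEq F]
    {P : F[X]} (hP : P ≠ 0) :
    Nat.card {x : F // P.eval x = 0} ≤ P.natDegree := by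
  rw [Nat.card_eq_fintype_card, Fintype.card_subtype]
  apply Polynomial.card_le_degree_of_subset_roots
  intro x hx
  simp only [Finset.mem_val, Finset.mem_filter] at hx
  rw [Polynomial.mem_roots hP]
  exact hx.2

/-- The Hermitian curve `y^q + y = x^(q+1)` over `F_{q^2}` has exactly `q^3`
affine rational points. -/
theorem hermitian_point_count (q : ℕ) (F : Type*) [Field F] [Fintype F]
    (hF : Fintype.card F = q ^ 2) :
    Nat.card {p : F × F // p.2 ^ q + p.2 = p.1 ^ (q + 1)} = q ^ 3 := by
  classical
  -- q is a power of the characteristic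
  obtain ⟨p, hc⟩ := CharP.exists F
  obtain ⟨n, hp, hcard⟩ := FiniteField.card F p
  haveI : Fact p.Prime := ⟨hp⟩
  have hq2 : 2 ≤ q := by
    have h2 : 1 < Fintype.card F := Fintype.one_lt_card
    rw [hF] at h2
    nlinarith
  have hqdvd : q ∣ p ^ (n : ℕ) := by
    rw [← hcard, hF]; exact dvd_pow_self q two_ne_zero
  obtain ⟨k, hk, hqpk⟩ := (Nat.dvd_prime_pow hp).mp hqdvd
  -- the additive map b ↦ b^q + b
  have hadd : ∀ x y : F, (x + y) ^ q = x ^ q + y ^ q := by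
    intro x y; rw [hqpk]; exact add_pow_char_pow ..
  let f : F →+ F :=
    { toFun := fun b => b ^ q + b
      map_zero' := by simp [zero_pow (by omega : q ≠ 0)]
      map_add' := fun x y => by
        show (x + y) ^ q + (x + y) = (x ^ q + x) + (y ^ q + y)
        rw [hadd]; ring }
  have hfdef : ∀ b : F, f b = b ^ q + b := fun b => rfl
  have hq0 : 0 < q := by omega
  -- kernel has at most q elements
  have hPker : (X ^ q + X : F[X]) ≠ 0 := by
    intro h
    have := congrArg (fun P => Polynomial.coeff P q) h
    simp [Polynomial.coeff_X_pow, Polynomial.coeff_X, (by omega : q ≠ 1)] at this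
    rw [if_neg (by omega : ¬(1:ℕ) = q)] at this
    simp at this
  have hker_le : Nat.card (f.ker) ≤ q := by
    have : Nat.card (f.ker) = Nat.card {x : F // (X ^ q + X : F[X]).eval x = 0} := by
      apply Nat.card_congr
      apply Equiv.subtypeEquivRight
      intro x
      simp [AddMonoidHom.mem_ker, hfdef]
    rw [this]
    refine (root_count_le hPker).trans ?_
    refine (Polynomial.natDegree_add_le _ _).trans ?_
    simp [Polynomial.natDegree_X_pow]; omega
  -- range is contained in the fixed set of x ↦ x^q
  have hqq : ∀ x : F, x ^ q ^ 2 = x := by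
    intro x; rw [← hF]; exact FiniteField.pow_card x
  have hrange_sub : (f.range : Set F) ⊆ {x : F | x ^ q = x} := by
    rintro _ ⟨b, rfl⟩
    show (f b) ^ q = f b
    rw [hfdef, hadd, ← pow_mul, ← pow_two, hqq, add_comm]
  have hPfix : (X ^ q - X : F[X]) ≠ 0 := by
    intro h
    have := congrArg (fun P => Polynomial.coeff P q) h
    simp [Polynomial.coeff_X_pow, Polynomial.coeff_X, (by omega : q ≠ 1)] at this
    rw [if_neg (by omega : ¬(1:ℕ) = q)] at this
    simp at this
  have hfix_le : Nat.card {x : F | x ^ q = x} ≤ q := by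
    have : Nat.card {x : F | x ^ q = x} =
        Nat.card {x : F // (X ^ q - X : F[X]).eval x = 0} := by
      apply Nat.card_congr
      apply Equiv.subtypeEquivRight
      intro x
      simp [sub_eq_zero, Set.mem_setOf_eq]
    rw [this]
    refine (root_count_le hPfix).trans ?_
    refine (Polynomial.natDegree_sub_le _ _).trans ?_
    simp [Polynomial.natDegree_X_pow]; omega
  have hrange_le : Nat.card (f.range) ≤ q :=
    le_trans (Nat.card_mono (Set.toFinite _) hrange_sub) hfix_le
  -- first isomorphism theorem: |F| = |F/ker| * |ker| = |range| * |ker|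
  have hiso : Nat.card (f.range) * Nat.card (f.ker) = q ^ 2 := by
    have h1 : Nat.card F = Nat.card (F ⧸ f.ker) * Nat.card (f.ker) :=
      AddSubgroup.card_eq_card_quotient_mul_card_addSubgroup f.ker
    have h2 : Nat.card (F ⧸ f.ker) = Nat.card (f.range) :=
      Nat.card_congr (QuotientAddGroup.quotientKerEquivRange f).toEquiv
    rw [← h2, ← h1, Nat.card_eq_fintype_card, hF]
  have hker_card : Nat.card (f.ker) = q := by
    nlinarith [Nat.card_pos (α := f.ker), Nat.card_pos (α := f.range)]
  have hrange_card : Nat.card (f.range) = q := by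
    nlinarith [Nat.card_pos (α := f.ker), Nat.card_pos (α := f.range)]
  -- range equals the fixed set
  have hrange_eq : (f.range : Set F) = {x : F | x ^ q = x} := by
    apply Set.eq_of_subset_of_ncard_le hrange_sub _ (Set.toFinite _)
    rw [← Nat.card_coe_set_eq, ← Nat.card_coe_set_eq]
    calc Nat.card {x : F | x ^ q = x} ≤ q := hfix_le
    _ = Nat.card (f.range : Set F) := by
        rw [← hrange_card]; rfl
  -- each a^(q+1) is in the range
  have hmem : ∀ a : F, ∃ b : F, f b = a ^ (q + 1) := by
    intro a
    have : a ^ (q + 1) ∈ {x : F | x ^ q = x} := by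
      show (a ^ (q + 1)) ^ q = a ^ (q + 1)
      rw [← pow_mul]
      have : (q + 1) * q = q ^ 2 + q := by ring
      rw [this, pow_add, hqq, pow_succ, mul_comm]
    rw [← hrange_eq] at this
    exact this
  -- each fiber has exactly q elements
  have hfiber : ∀ a : F, Nat.card {b : F // b ^ q + b = a ^ (q + 1)} = q := by
    intro a
    obtain ⟨b0, hb0⟩ := hmem a
    have e : {b : F // b ^ q + b = a ^ (q + 1)} ≃ f.ker := by
      refine Equiv.subtypeEquiv (Equiv.subRight b0) ?_
      intro b
      simp only [Equiv.subRight_apply, AddSubgroup.mem_mk, AddMonoidHom.mem_ker, map_sub, hb0]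
      rw [show b ^ q + b = f b from rfl, sub_eq_zero]
    rw [Nat.card_congr e, hker_card]
  -- total count
  have e2 : {p : F × F // p.2 ^ q + p.2 = p.1 ^ (q + 1)} ≃
      Σ a : F, {b : F // b ^ q + b = a ^ (q + 1)} :=
    Equiv.subtypeProdEquivSigmaSubtype (fun a b => b ^ q + b = a ^ (q + 1))
  rw [Nat.card_congr e2]
  simp only [Nat.card_eq_fintype_card, Fintype.card_sigma]
  calc ∑ a : F, Fintype.card {b : F // b ^ q + b = a ^ (q + 1)}
      = ∑ a : F, q := by
        apply Finset.sum_congr rfl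
        intro a _
        rw [← Nat.card_eq_fintype_card, hfiber a]
    _ = q ^ 2 * q := by rw [Finset.sum_const, Finset.card_univ, hF, smul_eq_mul]
    _ = q ^ 3 := by ring
end

section
/- Let r be a natural number with 0 ≤ r < q^3. The set I(r) = {(i,j) ∈ ℕ × ℕ : j ≤ q−1 and iq + j(q+1) ≤ r} satisfies: for r ≥ 2g where g = q(q−1)/2, |I(r)| = r + 1 − g. -/
/-!
For fixed `j < q`, the admissible `i` are exactly those with `(i + j + 1) q ≤ r + q - j`, so there
are `⌊(r + q - j)/q⌋ - j` of them. Once `r ≥ 2g = q(q - 1)` none of these differences truncates,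
and summing over `j` gives `∑_{j<q} ⌊(r + q - j)/q⌋ - ∑_{j<q} j = (r + 1) - q(q - 1)/2` by
Hermite's identity `∑_{k<q} ⌊(n + k)/q⌋ = n`.
-/

open Finset

theorem Nat.sum_range_add_div_self {q : ℕ} (hq : 0 < q) (n : ℕ) :
    ∑ k ∈ range q, (n + k) / q = n := by
  induction n with
  | zero => exact sum_eq_zero fun k hk => Nat.div_eq_of_lt (by simpa using hk)
  | succ n ih =>
    have shift := sum_range_succ' (fun k => (n + k) / q) q
    rw [sum_range_succ, ih, Nat.add_div_right n hq] at shift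
    simp only [add_zero, ← add_assoc] at shift
    simp only [Nat.add_right_comm n 1]
    omega

theorem Nat.sum_range_add_sub_div_self {q : ℕ} (hq : 0 < q) (n : ℕ) :
    ∑ j ∈ range q, (n + q - j) / q = n + 1 := by
  rw [← sum_range_reflect, ← Nat.sum_range_add_div_self hq (n + 1)]
  refine sum_congr rfl fun j hj => ?_
  rw [mem_range] at hj
  congr 1
  omega

theorem mul_add_mul_succ_le_iff {q : ℕ} (hq : 0 < q) (i j r : ℕ) :
    i * q + j * (q + 1) ≤ r ↔ i < (r + q - j) / q - j := by
  rw [Nat.lt_sub_iff_add_lt, Nat.lt_iff_add_one_le, Nat.le_div_iff_mul_le hq, add_mul, add_mul,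
    one_mul, mul_add_one]
  omega

theorem card_filter_mul_add_mul_succ_le {q : ℕ} (hq : 0 < q) (j r : ℕ) :
    #{i ∈ range (r + 1) | i * q + j * (q + 1) ≤ r} = (r + q - j) / q - j := by
  convert card_range ((r + q - j) / q - j) using 2
  ext i
  simp only [mem_filter, mem_range, ← mul_add_mul_succ_le_iff hq, and_iff_right_iff_imp]
  intro h
  nlinarith

theorem natCard_mul_add_mul_succ_le {q : ℕ} (hq : 0 < q) (r : ℕ) :
    Nat.card {ij : ℕ × ℕ // ij.2 ≤ q - 1 ∧ ij.1 * q + ij.2 * (q + 1) ≤ r} =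
      ∑ j ∈ range q, ((r + q - j) / q - j) := by
  let F := {ij ∈ range (r + 1) ×ˢ range q | ij.1 * q + ij.2 * (q + 1) ≤ r}
  have mem_F : ∀ ij : ℕ × ℕ, ij.2 ≤ q - 1 ∧ ij.1 * q + ij.2 * (q + 1) ≤ r ↔ ij ∈ F := by
    rintro ⟨i, j⟩
    simp only [F, mem_filter, mem_product, mem_range]
    constructor
    · rintro ⟨hj, h⟩
      exact ⟨⟨by nlinarith, by omega⟩, h⟩
    · rintro ⟨⟨-, hj⟩, h⟩
      exact ⟨by omega, h⟩
  rw [Nat.card_congr (Equiv.subtypeEquivRight mem_F), Nat.card_eq_finsetCard, card_filter,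
    sum_product_right]
  refine sum_congr rfl fun j _ => ?_
  rw [← card_filter_mul_add_mul_succ_le hq, card_filter]

theorem le_add_sub_div_self_of_mul_pred_le {q j r : ℕ} (hj : j < q) (hr : q * (q - 1) ≤ r) :
    j ≤ (r + q - j) / q := by
  obtain ⟨p, rfl⟩ : ∃ p, q = p + 1 := ⟨q - 1, by omega⟩
  rw [Nat.le_div_iff_mul_le (by omega)]
  simp only [Nat.add_sub_cancel] at hr
  have : j ≤ p := by omega
  have : j * (p + 1) + j ≤ r + (p + 1) := by nlinarith
  omega

theorem hermitian_monomial_count_general (q r : ℕ) (hq : IsPrimePow q)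
    (hr1 : q * (q - 1) ≤ r) :
    Nat.card {ij : ℕ × ℕ // ij.2 ≤ q - 1 ∧ ij.1 * q + ij.2 * (q + 1) ≤ r}
      + q * (q - 1) / 2 = r + 1 := by
  calc _ = ∑ j ∈ range q, ((r + q - j) / q - j + j) := by
        rw [natCard_mul_add_mul_succ_le hq.pos, ← sum_range_id, sum_add_distrib]
    _ = ∑ j ∈ range q, (r + q - j) / q :=
        sum_congr rfl fun j hj =>
          Nat.sub_add_cancel (le_add_sub_div_self_of_mul_pred_le (mem_range.1 hj) hr1)
    _ = r + 1 := Nat.sum_range_add_sub_div_self hq.pos r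

/-- Riemann–Roch dimension count for one-point Hermitian codes: for
`2g ≤ r < q^3` with `g = q(q-1)/2`, the number of monomials `x^i y^j`
(`0 ≤ j ≤ q-1`) of pole order `iq + j(q+1) ≤ r` is `r + 1 - g`. -/
theorem hermitian_monomial_count (q r : ℕ) (hq : IsPrimePow q)
    (hr1 : q * (q - 1) ≤ r) (hr2 : r < q ^ 3) :
    Nat.card {ij : ℕ × ℕ // ij.2 ≤ q - 1 ∧ ij.1 * q + ij.2 * (q + 1) ≤ r}
      + q * (q - 1) / 2 = r + 1 :=
  hermitian_monomial_count_general q r hq hr1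
end
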